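/- arXiv:2205.13283 — 2 statements merged into one kernel-verified Lean document; each statement's English description precedes it below -/
import Mathlib

section
/- Feature vectors under one-layer lifting: Given data S, a fully-connected NN, a one-layer deeper NN′, a parameter θ of NN, and any θ′ ∈ T_S(θ), there exist λ, μ ∈ ℝ^{m′_{q̂}} (the vectors of slopes and intercepts from the layer linearization condition) such that for every x ∈ S_x: f^[l]_{θ′}(x) = f^[l]_θ(x) for all original layer indices l ∈ [L], and the inserted layer satisfies f^[q̂]_{θ′}(x) = diag(λ)(W′^[q̂] f^[q]_θ(x) + b′^[q̂]) + μ. -/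
/-!
Common formalization of fully-connected neural networks, one-layer deeper
networks, and the critical lifting operator from
"Embedding Principle in Depth for the Loss Landscape Analysis of Deep Neural Networks".

Vectors are modelled as functions `ℕ → ℝ` (coordinates beyond the layer width
are irrelevant and feature vectors are zero-padded there); parameters assign to
each layer index `l ≥ 1` a weight "matrix" `ℕ → ℕ → ℝ` and a bias `ℕ → ℝ`.
-/

/-- Parameters of a network: for each layer `l ≥ 1` a weight matrix and a bias. -/
abbrev NNParams : Type := ℕ → (ℕ → ℕ → ℝ) × (ℕ → ℝ)

/-- Feature vectors `f^[l]_θ(x)`: `f^[0]_θ(x) = x` (truncated to the input width),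
`f^[l]_θ(x) = σ(W^[l] f^[l-1]_θ(x) + b^[l])` for `1 ≤ l ≤ L-1`, and no activation
at the output layer `L`.  Coordinates outside the layer width are `0`. -/
noncomputable def feat (σ : ℝ → ℝ) (m : ℕ → ℕ) (L : ℕ) (θ : NNParams) (x : ℕ → ℝ) :
    ℕ → ℕ → ℝ
  | 0 => fun i => if i < m 0 then x i else 0
  | l + 1 => fun i =>
      if i < m (l + 1) then
        (if l + 1 = L then id else σ)
          ((∑ j ∈ Finset.range (m l), (θ (l + 1)).1 i j * feat σ m L θ x l j)
            + (θ (l + 1)).2 i)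
      else 0

/-- Output `f_θ(x) = W^[L] f^[L-1]_θ(x) + b^[L]` of the network. -/
noncomputable def nnOut (σ : ℝ → ℝ) (m : ℕ → ℕ) (L : ℕ) (θ : NNParams) (x : ℕ → ℝ) :
    ℕ → ℝ :=
  feat σ m L θ x L

/-- Pre-activation of layer `l ≥ 1`: `W^[l] f^[l-1]_θ(x) + b^[l]`. -/
noncomputable def preAct (σ : ℝ → ℝ) (m : ℕ → ℕ) (L : ℕ) (θ : NNParams) (x : ℕ → ℝ)
    (l i : ℕ) : ℝ :=
  (∑ j ∈ Finset.range (m (l - 1)), (θ l).1 i j * feat σ m L θ x (l - 1) j) + (θ l).2 i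

/-- `(a,b)` is an affine subdomain of `σ` with slope `lam ≠ 0` and intercept `mu`. -/
def AffineSubdomain (σ : ℝ → ℝ) (a b lam mu : ℝ) : Prop :=
  a < b ∧ lam ≠ 0 ∧ ∀ t ∈ Set.Ioo a b, σ t = lam * t + mu

/-- Widths of the one-layer deeper network obtained by inserting a hidden layer of
width `mh` between layers `q` and `q+1` (the inserted layer gets index `q+1` and
all later layers are shifted up by one). -/
def insertWidth (m : ℕ → ℕ) (q mh : ℕ) : ℕ → ℕ :=
  fun l => if l ≤ q then m l else if l = q + 1 then mh else m (l - 1)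

/-- Local-in-layer condition: all layers of the deeper network other than the inserted
layer (deep index `q+1`) and the following layer (deep index `q+2`) are inherited
from the shallow network. -/
def LocalInLayer (m : ℕ → ℕ) (L q : ℕ) (θ θ' : NNParams) : Prop :=
  (∀ l, 1 ≤ l → l ≤ q →
    (∀ i < m l, ∀ j < m (l - 1), (θ' l).1 i j = (θ l).1 i j) ∧
    (∀ i < m l, (θ' l).2 i = (θ l).2 i)) ∧
  (∀ l, q + 3 ≤ l → l ≤ L + 1 →
    (∀ i < m (l - 1), ∀ j < m (l - 2), (θ' l).1 i j = (θ (l - 1)).1 i j) ∧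
    (∀ i < m (l - 1), (θ' l).2 i = (θ (l - 1)).2 i))

/-- Output preserving condition:
`W'^[q+1] diag(λ) W'^[q̂] = W^[q+1]` and
`W'^[q+1] diag(λ) b'^[q̂] + W'^[q+1] μ + b'^[q+1] = b^[q+1]`
(in deep indexing, `W'^[q̂] = (θ' (q+1)).1` and `W'^[q+1] = (θ' (q+2)).1`). -/
def OutputPres (m : ℕ → ℕ) (q mh : ℕ) (θ θ' : NNParams) (lam mu : ℕ → ℝ) : Prop :=
  (∀ i < m (q + 1), ∀ k < m q,
    (∑ j ∈ Finset.range mh, (θ' (q + 2)).1 i j * (lam j * (θ' (q + 1)).1 j k))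
      = (θ (q + 1)).1 i k) ∧
  (∀ i < m (q + 1),
    (∑ j ∈ Finset.range mh, (θ' (q + 2)).1 i j * (lam j * (θ' (q + 1)).2 j + mu j))
      + (θ' (q + 2)).2 i = (θ (q + 1)).2 i)

/-- `θ'` is a one-layer lifting of `θ` with explicit slope/intercept vectors
`lam, mu` and affine subdomains `(aa j, bb j)`: the local-in-layer, layer
linearization and output preserving conditions. -/
def LiftWitness (σ : ℝ → ℝ) (m : ℕ → ℕ) (L q mh : ℕ) {n : ℕ}
    (S : Fin n → (ℕ → ℝ) × (ℕ → ℝ)) (θ θ' : NNParams) (lam mu aa bb : ℕ → ℝ) : Prop :=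
  LocalInLayer m L q θ θ' ∧
  (∀ j < mh, AffineSubdomain σ (aa j) (bb j) (lam j) (mu j) ∧
    ∀ i : Fin n,
      preAct σ (insertWidth m q mh) (L + 1) θ' (S i).1 (q + 1) j ∈ Set.Ioo (aa j) (bb j)) ∧
  OutputPres m q mh θ θ' lam mu

/-- The one-layer lifting operator `T_S(θ)`: the set of all parameters of the
one-layer deeper network satisfying the local-in-layer, layer linearization and
output preserving conditions. -/
def liftSet (σ : ℝ → ℝ) (m : ℕ → ℕ) (L q mh : ℕ) {n : ℕ}
    (S : Fin n → (ℕ → ℝ) × (ℕ → ℝ)) (θ : NNParams) : Set NNParams :=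
  { θ' | ∃ lam mu aa bb : ℕ → ℝ, LiftWitness σ m L q mh S θ θ' lam mu aa bb }

/-- Empirical risk `R_S(θ) = (1/n) ∑ᵢ ℓ(f_θ(xᵢ), yᵢ)`. -/
noncomputable def empRisk (σ : ℝ → ℝ) (ℓ : (ℕ → ℝ) → (ℕ → ℝ) → ℝ) (m : ℕ → ℕ) (L : ℕ)
    {n : ℕ} (S : Fin n → (ℕ → ℝ) × (ℕ → ℝ)) (θ : NNParams) : ℝ :=
  (1 / (n : ℝ)) * ∑ i : Fin n, ℓ (nnOut σ m L θ (S i).1) (S i).2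

/-- Update a single weight entry `W^[l]_{ij}` of the parameters. -/
def updW (θ : NNParams) (l i j : ℕ) (t : ℝ) : NNParams :=
  fun l' => if l' = l then
    ((fun i' j' => if i' = i ∧ j' = j then t else (θ l).1 i' j'), (θ l).2)
  else θ l'

/-- Update a single bias entry `b^[l]_i` of the parameters. -/
def updB (θ : NNParams) (l i : ℕ) (t : ℝ) : NNParams :=
  fun l' => if l' = l then
    ((θ l).1, fun i' => if i' = i then t else (θ l).2 i')
  else θ l'

/-- `θ` is a critical point of the empirical risk: all partial derivatives with
respect to the weight and bias entries of all layers vanish. -/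
def IsCriticalPt (σ : ℝ → ℝ) (ℓ : (ℕ → ℝ) → (ℕ → ℝ) → ℝ) (m : ℕ → ℕ) (L : ℕ)
    {n : ℕ} (S : Fin n → (ℕ → ℝ) × (ℕ → ℝ)) (θ : NNParams) : Prop :=
  ∀ l, 1 ≤ l → l ≤ L →
    (∀ i < m l, ∀ j < m (l - 1),
      deriv (fun t => empRisk σ ℓ m L S (updW θ l i j t)) ((θ l).1 i j) = 0) ∧
    (∀ i < m l,
      deriv (fun t => empRisk σ ℓ m L S (updB θ l i t)) ((θ l).2 i) = 0)

/-- Feature gradients `g^[l]_θ(x)`: `g^[L] = 1` and `g^[l] = σ'(W^[l] f^[l-1] + b^[l])`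
for `l ≤ L-1`; coordinates outside the layer width are `0`. -/
noncomputable def featGrad (σ : ℝ → ℝ) (m : ℕ → ℕ) (L : ℕ) (θ : NNParams) (x : ℕ → ℝ)
    (l i : ℕ) : ℝ :=
  if i < m l then (if l = L then 1 else deriv σ (preAct σ m L θ x l i)) else 0

/-- Auxiliary downward recursion for error vectors: `errVecAux … k = z^[L-k]`. -/
noncomputable def errVecAux (σ : ℝ → ℝ) (ℓ : (ℕ → ℝ) → (ℕ → ℝ) → ℝ) (m : ℕ → ℕ) (L : ℕ)
    (θ : NNParams) (x y : ℕ → ℝ) : ℕ → ℕ → ℝ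
  | 0 => fun i =>
      if i < m L then
        deriv (fun t => ℓ (Function.update (nnOut σ m L θ x) i t) y) (nnOut σ m L θ x i)
      else 0
  | k + 1 => fun i =>
      if i < m (L - (k + 1)) then
        ∑ p ∈ Finset.range (m (L - k)),
          (θ (L - k)).1 p i * (errVecAux σ ℓ m L θ x y k p * featGrad σ m L θ x (L - k) p)
      else 0

/-- Error vectors `z^[l]_θ(x)`: `z^[L] = ∇_f ℓ(f_θ(x), y)` and
`z^[l] = (W^[l+1])ᵀ (z^[l+1] ∘ g^[l+1])`. -/
noncomputable def errVec (σ : ℝ → ℝ) (ℓ : (ℕ → ℝ) → (ℕ → ℝ) → ℝ) (m : ℕ → ℕ) (L : ℕ)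
    (θ : NNParams) (x y : ℕ → ℝ) (l : ℕ) : ℕ → ℝ :=
  errVecAux σ ℓ m L θ x y (L - l)

/-- A list of insertion positions/widths `(q, mh)` describes a valid chain of
one-layer-deeper insertions starting from widths `m` and depth `L`. -/
def ValidChain (m : ℕ → ℕ) (L : ℕ) : List (ℕ × ℕ) → Prop
  | [] => True
  | (q, mh) :: rest =>
      1 ≤ q ∧ q + 1 ≤ L ∧ min (m q) (m (q + 1)) ≤ mh ∧
        ValidChain (insertWidth m q mh) (L + 1) rest

/-- The widths obtained after performing a chain of insertions. -/
def chainWidths (m : ℕ → ℕ) : List (ℕ × ℕ) → (ℕ → ℕ)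
  | [] => m
  | (q, mh) :: rest => chainWidths (insertWidth m q mh) rest

/-- Multi-layer lifting: the composition of the one-layer liftings along a chain of
insertions. -/
def liftChain (σ : ℝ → ℝ) {n : ℕ} (S : Fin n → (ℕ → ℝ) × (ℕ → ℝ)) :
    (ℕ → ℕ) → ℕ → List (ℕ × ℕ) → NNParams → Set NNParams
  | _, _, [], θ => {θ}
  | m, L, (q, mh) :: rest, θ =>
      {θ'' | ∃ θ', θ' ∈ liftSet σ m L q mh S θ ∧
        θ'' ∈ liftChain σ S (insertWidth m q mh) (L + 1) rest θ'}

/-- `NN'` (widths `m'`, depth `L + J`) is `J`-layer deeper than `NN` (widths `m`,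
depth `L`): it is obtained by `J` successive one-layer insertions, each inserted
layer having width at least the minimum of the widths of its neighboring layers. -/
def JDeeper : ℕ → (ℕ → ℕ) → ℕ → (ℕ → ℕ) → Prop
  | 0, m, L, m' => ∀ l ≤ L, m' l = m l
  | J + 1, m, L, m' =>
      ∃ mmid, JDeeper J m L mmid ∧
        ∃ q mh, 1 ≤ q ∧ q + 1 ≤ L + J ∧ min (mmid q) (mmid (q + 1)) ≤ mh ∧
          ∀ l ≤ L + J + 1, m' l = insertWidth mmid q mh l

/-- One-step unfolding of `feat` at a successor layer. -/
lemma my_feat_succ (σ : ℝ → ℝ) (m : ℕ → ℕ) (L : ℕ) (θ : NNParams) (x : ℕ → ℝ)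
    (l i : ℕ) :
    feat σ m L θ x (l + 1) i =
      if i < m (l + 1) then
        (if l + 1 = L then id else σ)
          ((∑ j ∈ Finset.range (m l), (θ (l + 1)).1 i j * feat σ m L θ x l j)
            + (θ (l + 1)).2 i)
      else 0 := by
  rw [feat]

section MyAux

variable (σ : ℝ → ℝ) (m : ℕ → ℕ) (L q mh : ℕ) (θ θ' : NNParams) (x : ℕ → ℝ)
  (lam mu aa bb : ℕ → ℝ)

/-- Step A: feature vectors of layers `l ≤ q` are preserved. -/
lemma my_featA (hqL : q + 1 ≤ L)
    (hloc : ∀ l, 1 ≤ l → l ≤ q →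
      (∀ i < m l, ∀ j < m (l - 1), (θ' l).1 i j = (θ l).1 i j) ∧
      (∀ i < m l, (θ' l).2 i = (θ l).2 i)) :
    ∀ l ≤ q, ∀ idx, feat σ (insertWidth m q mh) (L + 1) θ' x l idx
      = feat σ m L θ x l idx := by
  intro l
  induction l with
  | zero =>
      intro _ idx
      simp [feat, insertWidth]
  | succ l ih =>
      intro hl idx
      have hlq : l ≤ q := Nat.le_of_succ_le hl
      have hmw : insertWidth m q mh (l + 1) = m (l + 1) := by simp [insertWidth, hl]
      have hmw' : insertWidth m q mh l = m l := by simp [insertWidth, hlq]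
      have hne' : l + 1 ≠ L + 1 := by omega
      have hne : l + 1 ≠ L := by omega
      rw [my_feat_succ, my_feat_succ, hmw, hmw', if_neg hne', if_neg hne]
      by_cases hidx : idx < m (l + 1)
      · rw [if_pos hidx, if_pos hidx]
        congr 2
        · apply Finset.sum_congr rfl
          intro j hj
          rw [ih hlq j, (hloc (l + 1) (by omega) hl).1 idx hidx j
            (by simpa using Finset.mem_range.mp hj)]
        · exact (hloc (l + 1) (by omega) hl).2 idx hidx
      · rw [if_neg hidx, if_neg hidx]

/-- Step B: formula for the inserted layer. -/
lemma my_featB (hqL : q + 1 ≤ L)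
    (hloc : ∀ l, 1 ≤ l → l ≤ q →
      (∀ i < m l, ∀ j < m (l - 1), (θ' l).1 i j = (θ l).1 i j) ∧
      (∀ i < m l, (θ' l).2 i = (θ l).2 i))
    (hlin : ∀ j < mh, AffineSubdomain σ (aa j) (bb j) (lam j) (mu j) ∧
      preAct σ (insertWidth m q mh) (L + 1) θ' x (q + 1) j ∈ Set.Ioo (aa j) (bb j)) :
    ∀ j < mh, feat σ (insertWidth m q mh) (L + 1) θ' x (q + 1) j
      = lam j * ((∑ k ∈ Finset.range (m q), (θ' (q + 1)).1 j k * feat σ m L θ x q k)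
          + (θ' (q + 1)).2 j) + mu j := by
  intro j hj
  have hmw : insertWidth m q mh (q + 1) = mh := by
    simp only [insertWidth]
    rw [if_neg (by omega)]
    simp
  have hmw' : insertWidth m q mh q = m q := by simp [insertWidth]
  have hne' : q + 1 ≠ L + 1 := by omega
  have hsum : (∑ k ∈ Finset.range (m q),
        (θ' (q + 1)).1 j k * feat σ (insertWidth m q mh) (L + 1) θ' x q k)
      = ∑ k ∈ Finset.range (m q), (θ' (q + 1)).1 j k * feat σ m L θ x q k :=
    Finset.sum_congr rfl fun k _ => by
      rw [my_featA σ m L q mh θ θ' x hqL hloc q le_rfl k]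
  have hpre : preAct σ (insertWidth m q mh) (L + 1) θ' x (q + 1) j
      = (∑ k ∈ Finset.range (m q), (θ' (q + 1)).1 j k * feat σ m L θ x q k)
        + (θ' (q + 1)).2 j := by
    unfold preAct
    rw [Nat.add_sub_cancel, hmw', hsum]
  have haff := (hlin j hj).1.2.2 _ (hlin j hj).2
  rw [hpre] at haff
  rw [my_feat_succ, hmw, hmw', if_pos hj, if_neg hne', hsum]
  exact haff

/-- Step C: the layer after the inserted one matches layer `q+1` of the shallow net. -/
lemma my_featC (hqL : q + 1 ≤ L)
    (hloc : ∀ l, 1 ≤ l → l ≤ q →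
      (∀ i < m l, ∀ j < m (l - 1), (θ' l).1 i j = (θ l).1 i j) ∧
      (∀ i < m l, (θ' l).2 i = (θ l).2 i))
    (hlin : ∀ j < mh, AffineSubdomain σ (aa j) (bb j) (lam j) (mu j) ∧
      preAct σ (insertWidth m q mh) (L + 1) θ' x (q + 1) j ∈ Set.Ioo (aa j) (bb j))
    (hout : OutputPres m q mh θ θ' lam mu) :
    ∀ idx, feat σ (insertWidth m q mh) (L + 1) θ' x (q + 2) idx
      = feat σ m L θ x (q + 1) idx := by
  intro idx
  have hmw : insertWidth m q mh (q + 2) = m (q + 1) := by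
    simp only [insertWidth]
    rw [if_neg (by omega), if_neg (by omega)]
    norm_num
  have hmw1 : insertWidth m q mh (q + 1) = mh := by
    simp only [insertWidth]
    rw [if_neg (by omega)]
    simp
  have hact : (if q + 2 = L + 1 then (id : ℝ → ℝ) else σ)
      = (if q + 1 = L then (id : ℝ → ℝ) else σ) := by
    by_cases h : q + 1 = L
    · rw [if_pos h, if_pos (by omega)]
    · rw [if_neg h, if_neg (by omega)]
  rw [show q + 2 = (q + 1) + 1 from rfl, my_feat_succ σ (insertWidth m q mh),
    my_feat_succ σ m, hmw, hmw1, hact]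
  by_cases hidx : idx < m (q + 1)
  · rw [if_pos hidx, if_pos hidx]
    refine congrArg _ ?_
    -- pre-activation equality
    have hB := my_featB σ m L q mh θ θ' x lam mu aa bb hqL hloc hlin
    calc (∑ j ∈ Finset.range mh,
            (θ' (q + 2)).1 idx j * feat σ (insertWidth m q mh) (L + 1) θ' x (q + 1) j)
          + (θ' (q + 2)).2 idx
        = (∑ j ∈ Finset.range mh, (θ' (q + 2)).1 idx j
            * (lam j * ((∑ k ∈ Finset.range (m q),
                (θ' (q + 1)).1 j k * feat σ m L θ x q k) + (θ' (q + 1)).2 j) + mu j))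
          + (θ' (q + 2)).2 idx := by
          congr 1
          exact Finset.sum_congr rfl fun j hj => by
            rw [hB j (Finset.mem_range.mp hj)]
      _ = (∑ j ∈ Finset.range mh, ∑ k ∈ Finset.range (m q),
              ((θ' (q + 2)).1 idx j * (lam j * (θ' (q + 1)).1 j k)) * feat σ m L θ x q k)
          + ((∑ j ∈ Finset.range mh,
              (θ' (q + 2)).1 idx j * (lam j * (θ' (q + 1)).2 j + mu j))
            + (θ' (q + 2)).2 idx) := by
          rw [← add_assoc]
          congr 1
          rw [← Finset.sum_add_distrib]
          refine Finset.sum_congr rfl fun j _ => ?_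
          rw [show (θ' (q + 2)).1 idx j * (lam j * ((∑ k ∈ Finset.range (m q),
                (θ' (q + 1)).1 j k * feat σ m L θ x q k) + (θ' (q + 1)).2 j) + mu j)
              = (θ' (q + 2)).1 idx j * lam j * (∑ k ∈ Finset.range (m q),
                (θ' (q + 1)).1 j k * feat σ m L θ x q k)
                + (θ' (q + 2)).1 idx j * (lam j * (θ' (q + 1)).2 j + mu j) from by ring,
            Finset.mul_sum]
          congr 1
          exact Finset.sum_congr rfl fun k _ => by ring
      _ = (∑ k ∈ Finset.range (m q), (θ (q + 1)).1 idx k * feat σ m L θ x q k)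
          + (θ (q + 1)).2 idx := by
          rw [Finset.sum_comm]
          congr 1
          · exact Finset.sum_congr rfl fun k hk => by
              rw [← Finset.sum_mul, hout.1 idx hidx k (Finset.mem_range.mp hk)]
          · exact hout.2 idx hidx
  · rw [if_neg hidx, if_neg hidx]

/-- Step D: feature vectors of layers `l ≥ q+1` are preserved (with shifted index). -/
lemma my_featD (hqL : q + 1 ≤ L)
    (hloc : LocalInLayer m L q θ θ')
    (hlin : ∀ j < mh, AffineSubdomain σ (aa j) (bb j) (lam j) (mu j) ∧
      preAct σ (insertWidth m q mh) (L + 1) θ' x (q + 1) j ∈ Set.Ioo (aa j) (bb j))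
    (hout : OutputPres m q mh θ θ' lam mu) :
    ∀ l, q + 1 ≤ l → l ≤ L → ∀ idx,
      feat σ (insertWidth m q mh) (L + 1) θ' x (l + 1) idx = feat σ m L θ x l idx := by
  intro l hl
  induction l, hl using Nat.le_induction with
  | base =>
      intro _ idx
      exact my_featC σ m L q mh θ θ' x lam mu aa bb hqL hloc.1 hlin hout idx
  | succ l hl ih =>
      intro hlL idx
      have hlL' : l ≤ L := by omega
      have hmw : insertWidth m q mh (l + 2) = m (l + 1) := by
        simp only [insertWidth]
        rw [if_neg (by omega), if_neg (by omega)]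
        norm_num
      have hmw' : insertWidth m q mh (l + 1) = m l := by
        simp only [insertWidth]
        rw [if_neg (by omega), if_neg (by omega)]
        norm_num
      have hact : (if l + 2 = L + 1 then (id : ℝ → ℝ) else σ)
          = (if l + 1 = L then (id : ℝ → ℝ) else σ) := by
        by_cases h : l + 1 = L
        · rw [if_pos h, if_pos (by omega)]
        · rw [if_neg h, if_neg (by omega)]
      have hW := hloc.2 (l + 2) (by omega) (by omega)
      simp only [show l + 2 - 1 = l + 1 from rfl, show l + 2 - 2 = l from rfl] at hW
      rw [show l + 2 = (l + 1) + 1 from rfl, my_feat_succ σ (insertWidth m q mh),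
        my_feat_succ σ m, hmw, hmw', hact]
      by_cases hidx : idx < m (l + 1)
      · rw [if_pos hidx, if_pos hidx]
        refine congrArg _ ?_
        congr 1
        · exact Finset.sum_congr rfl fun j hj => by
            rw [ih hlL' j, hW.1 idx hidx j (Finset.mem_range.mp hj)]
        · exact hW.2 idx hidx
      · rw [if_neg hidx, if_neg hidx]

end MyAux

/-- **Feature vectors under one-layer lifting.**  For any lifted parameter `θ'`
with slope/intercept vectors `lam`, `mu`, on every training input the feature
vectors of all original layers are preserved, and the inserted layer (deep index
`q+1`) satisfies `f^[q̂]_{θ'}(x) = diag(λ)(W'^[q̂] f^[q]_θ(x) + b'^[q̂]) + μ`. -/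
theorem feature_vectors_under_lifting
    (σ : ℝ → ℝ) (m : ℕ → ℕ) (L q mh : ℕ)
    (hq : 1 ≤ q) (hqL : q + 1 ≤ L)
    (hmh : min (m q) (m (q + 1)) ≤ mh)
    {n : ℕ} (S : Fin n → (ℕ → ℝ) × (ℕ → ℝ)) (θ θ' : NNParams)
    (hθ' : θ' ∈ liftSet σ m L q mh S θ) :
    ∃ lam mu aa bb : ℕ → ℝ, LiftWitness σ m L q mh S θ θ' lam mu aa bb ∧
      ∀ i : Fin n,
        (∀ l, 1 ≤ l → l ≤ L → ∀ idx < m l,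
          feat σ (insertWidth m q mh) (L + 1) θ' (S i).1 (if l ≤ q then l else l + 1) idx
            = feat σ m L θ (S i).1 l idx) ∧
        (∀ j < mh,
          feat σ (insertWidth m q mh) (L + 1) θ' (S i).1 (q + 1) j
            = lam j * ((∑ k ∈ Finset.range (m q), (θ' (q + 1)).1 j k * feat σ m L θ (S i).1 q k)
                + (θ' (q + 1)).2 j) + mu j) := by
  obtain ⟨lam, mu, aa, bb, hw⟩ := hθ'
  refine ⟨lam, mu, aa, bb, hw, fun i => ?_⟩
  obtain ⟨hloc, hlin, hout⟩ := hw
  have hlin' : ∀ j < mh, AffineSubdomain σ (aa j) (bb j) (lam j) (mu j) ∧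
      preAct σ (insertWidth m q mh) (L + 1) θ' (S i).1 (q + 1) j
        ∈ Set.Ioo (aa j) (bb j) :=
    fun j hj => ⟨(hlin j hj).1, (hlin j hj).2 i⟩
  constructor
  · intro l hl1 hlL idx _
    by_cases hlq : l ≤ q
    · rw [if_pos hlq]
      exact my_featA σ m L q mh θ θ' (S i).1 hqL hloc.1 l hlq idx
    · rw [if_neg hlq]
      exact my_featD σ m L q mh θ θ' (S i).1 lam mu aa bb hqL hloc hlin' hout l
        (by omega) hlL idx
  · exact my_featB σ m L q mh θ θ' (S i).1 lam mu aa bb hqL hloc.1 hlin'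
end

section
/- Feature gradients under one-layer lifting: Assume the activation σ is differentiable. Given data S, a fully-connected NN, a one-layer deeper NN′, a parameter θ of NN, and any θ′ ∈ T_S(θ) with layer-linearization slope vector λ ∈ ℝ^{m′_{q̂}}, for every x ∈ S_x the feature gradients satisfy g^[l]_{θ′}(x) = g^[l]_θ(x) for all original layer indices l ∈ [L], and the inserted layer satisfies g^[q̂]_{θ′}(x) = λ. -/
lemma feat_succ (σ : ℝ → ℝ) (m : ℕ → ℕ) (L : ℕ) (θ : NNParams) (x : ℕ → ℝ) (l i : ℕ) :
    feat σ m L θ x (l + 1) i =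
      if i < m (l + 1) then (if l + 1 = L then id else σ)
        (preAct σ m L θ x (l + 1) i) else 0 := by
  simp [feat, preAct]

lemma deriv_of_affine {σ : ℝ → ℝ} {a b lm μ p : ℝ}
    (h : ∀ t ∈ Set.Ioo a b, σ t = lm * t + μ) (hp : p ∈ Set.Ioo a b) :
    deriv σ p = lm := by
  have h1 : σ =ᶠ[nhds p] fun t => lm * t + μ :=
    Filter.eventuallyEq_of_mem (isOpen_Ioo.mem_nhds hp) h
  rw [h1.deriv_eq]
  have : HasDerivAt (fun t : ℝ => lm * t + μ) lm p := by
    simpa using ((hasDerivAt_id p).const_mul lm).add_const μ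
  exact this.deriv

lemma preAct_eq_of (σ : ℝ → ℝ) (m1 m2 : ℕ → ℕ) (L1 L2 l1 l2 : ℕ) (θ1 θ2 : NNParams)
    (x : ℕ → ℝ) (k : ℕ)
    (hm : m1 l1 = m2 l2)
    (hW : ∀ j < m2 l2, (θ1 (l1 + 1)).1 k j = (θ2 (l2 + 1)).1 k j)
    (hb : (θ1 (l1 + 1)).2 k = (θ2 (l2 + 1)).2 k)
    (hf : ∀ j < m2 l2, feat σ m1 L1 θ1 x l1 j = feat σ m2 L2 θ2 x l2 j) :
    preAct σ m1 L1 θ1 x (l1 + 1) k = preAct σ m2 L2 θ2 x (l2 + 1) k := by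
  unfold preAct
  simp only [Nat.add_sub_cancel]
  rw [hm, hb]
  congr 1
  exact Finset.sum_congr rfl fun j hj => by
    rw [hW j (Finset.mem_range.mp hj), hf j (Finset.mem_range.mp hj)]

lemma feat_eq_of (σ : ℝ → ℝ) (m1 m2 : ℕ → ℕ) (L1 L2 l1 l2 : ℕ) (θ1 θ2 : NNParams)
    (x : ℕ → ℝ)
    (hm : m1 (l1 + 1) = m2 (l2 + 1)) (hL : (l1 + 1 = L1) ↔ (l2 + 1 = L2))
    (hp : ∀ k < m2 (l2 + 1),
      preAct σ m1 L1 θ1 x (l1 + 1) k = preAct σ m2 L2 θ2 x (l2 + 1) k) :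
    ∀ k, feat σ m1 L1 θ1 x (l1 + 1) k = feat σ m2 L2 θ2 x (l2 + 1) k := by
  intro k
  rw [feat_succ, feat_succ, hm]
  by_cases hk : k < m2 (l2 + 1)
  · rw [if_pos hk, if_pos hk, hp k hk]
    by_cases h1 : l2 + 1 = L2
    · rw [if_pos (hL.mpr h1), if_pos h1]
    · rw [if_neg (fun h => h1 (hL.mp h)), if_neg h1]
  · rw [if_neg hk, if_neg hk]

/-- **Feature gradients under one-layer lifting.**  Assume `σ` is differentiable.
For any lifted parameter `θ'` with slope vector `lam`, on every training input the
feature gradients of all original layers are preserved, and the inserted layer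
satisfies `g^[q̂]_{θ'}(x) = λ`. -/
theorem feature_gradients_under_lifting
    (σ : ℝ → ℝ) (m : ℕ → ℕ) (L q mh : ℕ)
    (hq : 1 ≤ q) (hqL : q + 1 ≤ L)
    (hmh : min (m q) (m (q + 1)) ≤ mh)
    (hσ : Differentiable ℝ σ)
    {n : ℕ} (S : Fin n → (ℕ → ℝ) × (ℕ → ℝ)) (θ θ' : NNParams)
    (lam mu aa bb : ℕ → ℝ)
    (hw : LiftWitness σ m L q mh S θ θ' lam mu aa bb) :
    ∀ i : Fin n,
      (∀ l, 1 ≤ l → l ≤ L → ∀ idx < m l,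
        featGrad σ (insertWidth m q mh) (L + 1) θ' (S i).1 (if l ≤ q then l else l + 1) idx
          = featGrad σ m L θ (S i).1 l idx) ∧
      (∀ j < mh,
        featGrad σ (insertWidth m q mh) (L + 1) θ' (S i).1 (q + 1) j = lam j) := by
  obtain ⟨hloc, hlin, hout⟩ := hw
  intro i
  set x := (S i).1 with hxdef
  set m' := insertWidth m q mh with hm'def
  have hm'le : ∀ l, l ≤ q → m' l = m l := by
    intro l hl; simp [hm'def, insertWidth, hl]
  have hm'ins : m' (q + 1) = mh := by
    simp [hm'def, insertWidth]
  have hm'gt : ∀ l, q + 2 ≤ l → m' l = m (l - 1) := by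
    intro l hl
    simp [hm'def, insertWidth, show ¬ l ≤ q by omega, show l ≠ q + 1 by omega]
  -- feature equality below the inserted layer
  have hfeatA : ∀ l, l ≤ q → ∀ k, feat σ m' (L + 1) θ' x l k = feat σ m L θ x l k := by
    intro l
    induction l with
    | zero =>
      intro _ k
      have h0 : m' 0 = m 0 := hm'le 0 (Nat.zero_le q)
      simp [feat, h0]
    | succ l ih =>
      intro hl k'
      have hl' : l ≤ q := by omega
      refine feat_eq_of σ m' m (L + 1) L l l θ' θ x (hm'le (l + 1) hl)
        (iff_of_false (by omega) (by omega)) (fun k hk => ?_) k'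
      exact preAct_eq_of σ m' m (L + 1) L l l θ' θ x k (hm'le l hl')
        (fun j hj => (hloc.1 (l + 1) (by omega) hl).1 k hk j hj)
        ((hloc.1 (l + 1) (by omega) hl).2 k hk)
        (fun j _ => ih hl' j)
  -- pre-activation of the inserted layer, in terms of shallow features
  have hpa : ∀ j, preAct σ m' (L + 1) θ' x (q + 1) j
      = (∑ c ∈ Finset.range (m q), (θ' (q + 1)).1 j c * feat σ m L θ x q c)
        + (θ' (q + 1)).2 j := by
    intro j
    unfold preAct
    simp only [Nat.add_sub_cancel]
    rw [hm'le q le_rfl]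
    congr 1
    exact Finset.sum_congr rfl fun c _ => by rw [hfeatA q le_rfl c]
  -- feature of the inserted layer is affine in its pre-activation
  have hfins : ∀ j < mh, feat σ m' (L + 1) θ' x (q + 1) j
      = lam j * preAct σ m' (L + 1) θ' x (q + 1) j + mu j := by
    intro j hj
    rw [feat_succ, if_pos (by rw [hm'ins]; exact hj),
      if_neg (by omega : ¬ q + 1 = L + 1)]
    exact (hlin j hj).1.2.2 _ ((hlin j hj).2 i)
  -- base case: pre-activation of deep layer q+2 equals shallow layer q+1
  have hbase : ∀ k < m (q + 1),
      preAct σ m' (L + 1) θ' x (q + 2) k = preAct σ m L θ x (q + 1) k := by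
    intro k hk
    have e1 : preAct σ m' (L + 1) θ' x (q + 2) k
        = (∑ j ∈ Finset.range mh, (θ' (q + 2)).1 k j * feat σ m' (L + 1) θ' x (q + 1) j)
          + (θ' (q + 2)).2 k := by
      unfold preAct; rw [show m' (q + 2 - 1) = mh from hm'ins]; rfl
    have e2 : preAct σ m L θ x (q + 1) k
        = (∑ c ∈ Finset.range (m q), (θ (q + 1)).1 k c * feat σ m L θ x q c)
          + (θ (q + 1)).2 k := rfl
    rw [e1, e2]
    have key : ∀ j ∈ Finset.range mh,
        (θ' (q + 2)).1 k j * feat σ m' (L + 1) θ' x (q + 1) j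
          = (∑ c ∈ Finset.range (m q),
              ((θ' (q + 2)).1 k j * (lam j * (θ' (q + 1)).1 j c)) * feat σ m L θ x q c)
            + (θ' (q + 2)).1 k j * (lam j * (θ' (q + 1)).2 j + mu j) := by
      intro j hj
      rw [hfins j (Finset.mem_range.mp hj), hpa j]
      have hs : (∑ c ∈ Finset.range (m q),
          ((θ' (q + 2)).1 k j * (lam j * (θ' (q + 1)).1 j c)) * feat σ m L θ x q c)
          = (θ' (q + 2)).1 k j * lam j *
            ∑ c ∈ Finset.range (m q), (θ' (q + 1)).1 j c * feat σ m L θ x q c := by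
        rw [Finset.mul_sum]
        exact Finset.sum_congr rfl fun c _ => by ring
      rw [hs]; ring
    rw [Finset.sum_congr rfl key, Finset.sum_add_distrib, Finset.sum_comm]
    have e3 : ∀ c ∈ Finset.range (m q),
        (∑ j ∈ Finset.range mh,
          ((θ' (q + 2)).1 k j * (lam j * (θ' (q + 1)).1 j c)) * feat σ m L θ x q c)
          = (θ (q + 1)).1 k c * feat σ m L θ x q c := by
      intro c hc
      rw [← Finset.sum_mul, hout.1 k hk c (Finset.mem_range.mp hc)]
    rw [Finset.sum_congr rfl e3, add_assoc, hout.2 k hk]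
  -- main chain: all layers above the insertion
  have hmain : ∀ l, q + 1 ≤ l → l ≤ L →
      (∀ k < m l, preAct σ m' (L + 1) θ' x (l + 1) k = preAct σ m L θ x l k) ∧
      (∀ k, feat σ m' (L + 1) θ' x (l + 1) k = feat σ m L θ x l k) := by
    intro l hl1
    induction l, hl1 using Nat.le_induction with
    | base =>
      intro _
      exact ⟨hbase, feat_eq_of σ m' m (L + 1) L (q + 1) q θ' θ x
        (show m' (q + 2) = m (q + 1) from hm'gt (q + 2) (by omega))
        (by omega) hbase⟩
    | succ l hl ih =>
      intro hL2
      obtain ⟨ihp, ihf⟩ := ih (by omega)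
      have hw2 := hloc.2 (l + 2) (by omega) (by omega)
      have hp2 : ∀ k < m (l + 1),
          preAct σ m' (L + 1) θ' x (l + 2) k = preAct σ m L θ x (l + 1) k := by
        intro k hk
        exact preAct_eq_of σ m' m (L + 1) L (l + 1) l θ' θ x k
          (show m' (l + 1) = m l from hm'gt (l + 1) (by omega))
          (fun j hj => hw2.1 k hk j hj) (hw2.2 k hk) (fun j _ => ihf j)
      exact ⟨hp2, feat_eq_of σ m' m (L + 1) L (l + 1) l θ' θ x
        (show m' (l + 2) = m (l + 1) from hm'gt (l + 2) (by omega))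
        (by omega) hp2⟩
  refine ⟨?_, ?_⟩
  · intro l hl1 hlL idx hidx
    by_cases hle : l ≤ q
    · rw [if_pos hle]
      obtain ⟨l', rfl⟩ : ∃ l', l = l' + 1 := ⟨l - 1, by omega⟩
      have hpre : preAct σ m' (L + 1) θ' x (l' + 1) idx
          = preAct σ m L θ x (l' + 1) idx :=
        preAct_eq_of σ m' m (L + 1) L l' l' θ' θ x idx (hm'le l' (by omega))
          (fun j hj => (hloc.1 (l' + 1) (by omega) hle).1 idx hidx j hj)
          ((hloc.1 (l' + 1) (by omega) hle).2 idx hidx)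
          (fun j _ => hfeatA l' (by omega) j)
      unfold featGrad
      rw [hm'le (l' + 1) hle, if_pos hidx, if_pos hidx,
        if_neg (by omega : ¬ l' + 1 = L + 1), if_neg (by omega : ¬ l' + 1 = L), hpre]
    · rw [if_neg hle]
      by_cases hlL' : l = L
      · unfold featGrad
        rw [show m' (l + 1) = m l from hm'gt (l + 1) (by omega),
          if_pos hidx, if_pos hidx, if_pos (by omega : l + 1 = L + 1), if_pos hlL']
      · unfold featGrad
        rw [show m' (l + 1) = m l from hm'gt (l + 1) (by omega),
          if_pos hidx, if_pos hidx, if_neg (by omega : ¬ l + 1 = L + 1),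
          if_neg hlL', (hmain l (by omega) hlL).1 idx hidx]
  · intro j hj
    unfold featGrad
    rw [hm'ins, if_pos hj, if_neg (by omega : ¬ q + 1 = L + 1)]
    exact deriv_of_affine (hlin j hj).1.2.2 ((hlin j hj).2 i)
end
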